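/- arXiv:2101.08297 — 4 statements merged into one kernel-verified Lean document; each statement's English description precedes it below -/
import Mathlib

section
/- Let Φ be an L-layer feedforward neural network with weight matrices W_ℓ, biases b_ℓ, and monotone activation functions applied componentwise, defined by η_ℓ = φ_ℓ(W_ℓ η_{ℓ-1} + b_ℓ). Define the auxiliary networks Φ_lo and Φ_hi by η_lo_ℓ = φ_ℓ(W_lo_ℓ η_hi_{ℓ-1} + W_hi_ℓ η_lo_{ℓ-1} + b_ℓ) and η_hi_ℓ = φ_ℓ(W_lo_ℓ η_lo_{ℓ-1} + W_hi_ℓ η_hi_{ℓ-1} + b_ℓ), where W_lo_ℓ and W_hi_ℓ are the negative and nonnegative parts of W_ℓ. Then for any inputs η_lo_0 ≤ η_0 ≤ η_hi_0 componentwise, we have Φ_lo(η_lo_0, η_hi_0) ≤ Φ(η_0) ≤ Φ_hi(η_lo_0, η_hi_0) componentwise. -/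
lemma split_dot_bounds {m : ℕ} (w x lo hi : Fin m → ℝ)
    (h1 : lo ≤ x) (h2 : x ≤ hi) :
    (∑ j, min (w j) 0 * hi j + ∑ j, max (w j) 0 * lo j ≤ ∑ j, w j * x j) ∧
    (∑ j, w j * x j ≤ ∑ j, min (w j) 0 * lo j + ∑ j, max (w j) 0 * hi j) := by
  constructor
  · rw [← Finset.sum_add_distrib]
    refine Finset.sum_le_sum fun j _ => ?_
    have := h1 j; have := h2 j
    rcases le_or_gt (w j) 0 with h | h
    · rw [min_eq_left h, max_eq_right h]; nlinarith
    · rw [min_eq_right h.le, max_eq_left h.le]; nlinarith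
  · rw [← Finset.sum_add_distrib]
    refine Finset.sum_le_sum fun j _ => ?_
    have := h1 j; have := h2 j
    rcases le_or_gt (w j) 0 with h | h
    · rw [min_eq_left h, max_eq_right h]; nlinarith
    · rw [min_eq_right h.le, max_eq_left h.le]; nlinarith

/-- Theorem 1: the auxiliary neural networks built from split weight matrices
bound the original network's output over an input interval. -/
theorem auxiliary_networks_sound (L : ℕ) (n : ℕ → ℕ)
    (W : ∀ ℓ, Matrix (Fin (n (ℓ + 1))) (Fin (n ℓ)) ℝ)
    (b : ∀ ℓ, Fin (n (ℓ + 1)) → ℝ)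
    (ψ : ℕ → ℝ → ℝ) (hψ : ∀ ℓ, Monotone (ψ ℓ))
    (η ηlo ηhi : ∀ ℓ, Fin (n ℓ) → ℝ)
    (hη : ∀ ℓ < L, η (ℓ + 1) = fun i => ψ ℓ (((W ℓ).mulVec (η ℓ) + b ℓ) i))
    (hlo : ∀ ℓ < L, ηlo (ℓ + 1) = fun i => ψ ℓ
      ((Matrix.mulVec (Matrix.of fun i j => min (W ℓ i j) 0) (ηhi ℓ)
        + Matrix.mulVec (Matrix.of fun i j => max (W ℓ i j) 0) (ηlo ℓ) + b ℓ) i))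
    (hhi : ∀ ℓ < L, ηhi (ℓ + 1) = fun i => ψ ℓ
      ((Matrix.mulVec (Matrix.of fun i j => min (W ℓ i j) 0) (ηlo ℓ)
        + Matrix.mulVec (Matrix.of fun i j => max (W ℓ i j) 0) (ηhi ℓ) + b ℓ) i))
    (h0lo : ηlo 0 ≤ η 0) (h0hi : η 0 ≤ ηhi 0) :
    ηlo L ≤ η L ∧ η L ≤ ηhi L := by
  suffices h : ∀ ℓ ≤ L, ηlo ℓ ≤ η ℓ ∧ η ℓ ≤ ηhi ℓ from h L le_rfl
  intro ℓ hℓ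
  induction ℓ with
  | zero => exact ⟨h0lo, h0hi⟩
  | succ k ih =>
    have hk : k < L := hℓ
    obtain ⟨ihlo, ihhi⟩ := ih (le_of_lt hk)
    rw [hη k hk, hlo k hk, hhi k hk]
    have hb := fun i => split_dot_bounds (W k i) (η k) (ηlo k) (ηhi k) ihlo ihhi
    constructor <;> intro i <;> apply hψ k <;>
      simp only [Pi.add_apply, Matrix.mulVec, dotProduct, Matrix.of_apply] <;>
      [exact add_le_add_left (hb i).1 _; exact add_le_add_left (hb i).2 _]
end

section
/- Let W : Fin m → Fin n → ℝ with negative part W_lo and nonnegative part W_hi, and let ψ : ℝ → ℝ be monotone and α-Lipschitz. For vectors x_lo ≤ x ≤ x_hi componentwise, the componentwise difference satisfies ψ(W • x + b) - ψ(W_lo • x_hi + W_hi • x_lo + b) ≤ α * (W_hi • (x - x_lo) - W_lo • (x_hi - x)) componentwise. -/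
theorem layer_lower_gap_bound (m n : ℕ) (W : Matrix (Fin m) (Fin n) ℝ)
    (b : Fin m → ℝ) (ψ : ℝ → ℝ) (α : ℝ)
    (hmono : Monotone ψ) (hlip : ∀ x y : ℝ, |ψ x - ψ y| ≤ α * |x - y|)
    (xlo x xhi : Fin n → ℝ) (h1 : xlo ≤ x) (h2 : x ≤ xhi) :
    ∀ i,
      ψ ((W.mulVec x + b) i)
        - ψ ((Matrix.mulVec (Matrix.of fun i j => min (W i j) 0) xhi
              + Matrix.mulVec (Matrix.of fun i j => max (W i j) 0) xlo + b) i)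
      ≤ α * ((Matrix.mulVec (Matrix.of fun i j => max (W i j) 0) (x - xlo)
              - Matrix.mulVec (Matrix.of fun i j => min (W i j) 0) (xhi - x)) i) := by
  intro i
  set u := (W.mulVec x + b) i with hu
  set v := ((Matrix.mulVec (Matrix.of fun i j => min (W i j) 0) xhi
              + Matrix.mulVec (Matrix.of fun i j => max (W i j) 0) xlo + b) i) with hv
  set R := ((Matrix.mulVec (Matrix.of fun i j => max (W i j) 0) (x - xlo)
              - Matrix.mulVec (Matrix.of fun i j => min (W i j) 0) (xhi - x)) i) with hR
  have key : u - v = R := by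
    simp only [hu, hv, hR, Matrix.mulVec, dotProduct, Pi.add_apply, Pi.sub_apply,
      Matrix.of_apply]
    have hterm : ∀ j ∈ Finset.univ, W i j * x j - (min (W i j) 0 * xhi j + max (W i j) 0 * xlo j)
        = max (W i j) 0 * (x j - xlo j) - min (W i j) 0 * (xhi j - x j) := by
      intro j _
      have h : min (W i j) 0 + max (W i j) 0 = W i j := by
        have := min_add_max (W i j) 0; linarith
      linear_combination (-(x j)) * h
    have hsum : ∑ j, (W i j * x j) - ((∑ j, min (W i j) 0 * xhi j) + ∑ j, max (W i j) 0 * xlo j)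
        = ∑ j, (max (W i j) 0 * (x j - xlo j) - min (W i j) 0 * (xhi j - x j)) := by
      rw [← Finset.sum_add_distrib, ← Finset.sum_sub_distrib]
      exact Finset.sum_congr rfl hterm
    have e1 : ∑ j, (max (W i j) 0 * (x j - xlo j) - min (W i j) 0 * (xhi j - x j))
        = (∑ j, max (W i j) 0 * (x j - xlo j)) - ∑ j, min (W i j) 0 * (xhi j - x j) :=
      Finset.sum_sub_distrib _ _
    linarith [hsum, e1]
  have hRnn : 0 ≤ R := by
    simp only [hR, Matrix.mulVec, dotProduct, Pi.sub_apply, Matrix.of_apply]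
    rw [← Finset.sum_sub_distrib]
    apply Finset.sum_nonneg
    intro j _
    have h1j := h1 j
    have h2j := h2 j
    nlinarith [le_max_right (W i j) 0, min_le_right (W i j) 0]
  calc ψ u - ψ v ≤ |ψ u - ψ v| := le_abs_self _
    _ ≤ α * |u - v| := hlip u v
    _ = α * R := by rw [key, abs_of_nonneg hRnn]
end

section
/- Let W : Fin m → Fin n → ℝ with negative part W_lo and nonnegative part W_hi, let b : Fin m → ℝ, and let ψ : ℝ → ℝ be monotone and α-Lipschitz. For vectors x_lo ≤ x ≤ x_hi componentwise, ψ(W_lo • x_lo + W_hi • x_hi + b) - ψ(W • x + b) ≤ α * (W_hi • (x_hi - x) - W_lo • (x - x_lo)) componentwise. -/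
theorem layer_upper_gap_bound (m n : ℕ) (W : Matrix (Fin m) (Fin n) ℝ)
    (b : Fin m → ℝ) (ψ : ℝ → ℝ) (α : ℝ)
    (hmono : Monotone ψ) (hlip : ∀ x y : ℝ, |ψ x - ψ y| ≤ α * |x - y|)
    (xlo x xhi : Fin n → ℝ) (h1 : xlo ≤ x) (h2 : x ≤ xhi) :
    ∀ i,
      ψ ((Matrix.mulVec (Matrix.of fun i j => min (W i j) 0) xlo
            + Matrix.mulVec (Matrix.of fun i j => max (W i j) 0) xhi + b) i)
        - ψ ((W.mulVec x + b) i)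
      ≤ α * ((Matrix.mulVec (Matrix.of fun i j => max (W i j) 0) (xhi - x)
              - Matrix.mulVec (Matrix.of fun i j => min (W i j) 0) (x - xlo)) i) := by
  intro i
  simp only [Matrix.mulVec, dotProduct, Pi.add_apply, Pi.sub_apply, Matrix.of_apply]
  have hWx : ∑ j, W i j * x j
      = ∑ j, min (W i j) 0 * x j + ∑ j, max (W i j) 0 * x j := by
    rw [← Finset.sum_add_distrib]
    exact Finset.sum_congr rfl fun j _ => by rw [← add_mul, min_add_max, add_zero]
  have hd : (∑ j, min (W i j) 0 * xlo j + ∑ j, max (W i j) 0 * xhi j + b i)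
      - (∑ j, W i j * x j + b i)
      = (∑ j, max (W i j) 0 * (xhi j - x j)) - ∑ j, min (W i j) 0 * (x j - xlo j) := by
    simp only [mul_sub, Finset.sum_sub_distrib]
    rw [hWx]; ring
  have hpos : 0 ≤ (∑ j, max (W i j) 0 * (xhi j - x j))
      - ∑ j, min (W i j) 0 * (x j - xlo j) := by
    have hmax : 0 ≤ ∑ j, max (W i j) 0 * (xhi j - x j) :=
      Finset.sum_nonneg fun j _ =>
        mul_nonneg (le_max_right _ _) (sub_nonneg.2 (h2 j))
    have hmin : (∑ j, min (W i j) 0 * (x j - xlo j)) ≤ 0 :=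
      Finset.sum_nonpos fun j _ =>
        mul_nonpos_of_nonpos_of_nonneg (min_le_right _ _) (sub_nonneg.2 (h1 j))
    linarith
  calc ψ (∑ j, min (W i j) 0 * xlo j + ∑ j, max (W i j) 0 * xhi j + b i)
        - ψ (∑ j, W i j * x j + b i)
      ≤ |ψ (∑ j, min (W i j) 0 * xlo j + ∑ j, max (W i j) 0 * xhi j + b i)
        - ψ (∑ j, W i j * x j + b i)| := le_abs_self _
    _ ≤ α * |(∑ j, min (W i j) 0 * xlo j + ∑ j, max (W i j) 0 * xhi j + b i)
        - (∑ j, W i j * x j + b i)| := hlip _ _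
    _ = _ := by rw [hd, abs_of_nonneg hpos]
end

section
/- Let Φ, Φ_lo, Φ_hi be an L-layer neural network and its auxiliary networks built from split weight matrices W_lo_ℓ, W_hi_ℓ with monotone α-Lipschitz activations. Suppose nonnegative matrices S_lo_ℓ, S_hi_ℓ (ℓ = 0,…,L) with S_lo_L = S_hi_L = I satisfy, for each ℓ ≥ 1, the entrywise inequalities α(S_lo_ℓ • W_hi_ℓ - S_hi_ℓ • W_lo_ℓ) ≤ S_lo_{ℓ-1} and α(S_hi_ℓ • W_hi_ℓ - S_lo_ℓ • W_lo_ℓ) ≤ S_hi_{ℓ-1}. Then for any η_lo_0 ≤ η_0 ≤ η_hi_0 componentwise, Φ_hi(η_lo_0, η_hi_0) - Φ_lo(η_lo_0, η_hi_0) ≤ S_lo_0 • (η_0 - η_lo_0) + S_hi_0 • (η_hi_0 - η_0) componentwise. -/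
open Matrix

private lemma mulVec_mono_right' {m k : ℕ} (A : Matrix (Fin m) (Fin k) ℝ)
    (hA : ∀ i j, 0 ≤ A i j) {u v : Fin k → ℝ} (h : u ≤ v) :
    A.mulVec u ≤ A.mulVec v := by
  intro i
  simp only [Matrix.mulVec, dotProduct]
  exact Finset.sum_le_sum fun j _ => mul_le_mul_of_nonneg_left (h j) (hA i j)

private lemma mulVec_anti_right' {m k : ℕ} (A : Matrix (Fin m) (Fin k) ℝ)
    (hA : ∀ i j, A i j ≤ 0) {u v : Fin k → ℝ} (h : u ≤ v) :
    A.mulVec v ≤ A.mulVec u := by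
  intro i
  simp only [Matrix.mulVec, dotProduct]
  exact Finset.sum_le_sum fun j _ => mul_le_mul_of_nonpos_left (h j) (hA i j)

private lemma mulVec_mono_left' {m k : ℕ} {A B : Matrix (Fin m) (Fin k) ℝ}
    (h : ∀ i j, A i j ≤ B i j) {v : Fin k → ℝ} (hv : 0 ≤ v) :
    A.mulVec v ≤ B.mulVec v := by
  intro i
  simp only [Matrix.mulVec, dotProduct]
  exact Finset.sum_le_sum fun j _ => mul_le_mul_of_nonneg_right (h i j) (hv j)

/-- Lemma 2: the width of the interval produced by the auxiliary networks is
bounded linearly in the input interval widths via the matrices S. -/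
theorem interval_width_bound (L : ℕ) (n : ℕ → ℕ)
    (W : ∀ ℓ, Matrix (Fin (n (ℓ + 1))) (Fin (n ℓ)) ℝ)
    (b : ∀ ℓ, Fin (n (ℓ + 1)) → ℝ)
    (ψ : ℕ → ℝ → ℝ) (α : ℝ)
    (hψ : ∀ ℓ, Monotone (ψ ℓ))
    (hlip : ∀ ℓ, ∀ x y : ℝ, |ψ ℓ x - ψ ℓ y| ≤ α * |x - y|)
    (η ηlo ηhi : ∀ ℓ, Fin (n ℓ) → ℝ)
    (hη : ∀ ℓ < L, η (ℓ + 1) = fun i => ψ ℓ (((W ℓ).mulVec (η ℓ) + b ℓ) i))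
    (hlo : ∀ ℓ < L, ηlo (ℓ + 1) = fun i => ψ ℓ
      ((Matrix.mulVec (Matrix.of fun i j => min (W ℓ i j) 0) (ηhi ℓ)
        + Matrix.mulVec (Matrix.of fun i j => max (W ℓ i j) 0) (ηlo ℓ) + b ℓ) i))
    (hhi : ∀ ℓ < L, ηhi (ℓ + 1) = fun i => ψ ℓ
      ((Matrix.mulVec (Matrix.of fun i j => min (W ℓ i j) 0) (ηlo ℓ)
        + Matrix.mulVec (Matrix.of fun i j => max (W ℓ i j) 0) (ηhi ℓ) + b ℓ) i))
    (Slo Shi : ∀ ℓ, Matrix (Fin (n L)) (Fin (n ℓ)) ℝ)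
    (hSlo_nonneg : ∀ ℓ ≤ L, ∀ i j, 0 ≤ Slo ℓ i j)
    (hShi_nonneg : ∀ ℓ ≤ L, ∀ i j, 0 ≤ Shi ℓ i j)
    (hSL_lo : Slo L = 1) (hSL_hi : Shi L = 1)
    (hrec_lo : ∀ ℓ < L, ∀ i j,
      α * ((Slo (ℓ + 1) * Matrix.of fun i j => max (W ℓ i j) 0) i j
           - (Shi (ℓ + 1) * Matrix.of fun i j => min (W ℓ i j) 0) i j) ≤ Slo ℓ i j)
    (hrec_hi : ∀ ℓ < L, ∀ i j,
      α * ((Shi (ℓ + 1) * Matrix.of fun i j => max (W ℓ i j) 0) i j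
           - (Slo (ℓ + 1) * Matrix.of fun i j => min (W ℓ i j) 0) i j) ≤ Shi ℓ i j)
    (h0lo : ηlo 0 ≤ η 0) (h0hi : η 0 ≤ ηhi 0) :
    ηhi L - ηlo L ≤ (Slo 0).mulVec (η 0 - ηlo 0) + (Shi 0).mulVec (ηhi 0 - η 0) := by
  have hα : 0 ≤ α := by
    have h := hlip 0 0 1
    simp at h
    nlinarith [abs_nonneg (ψ 0 0 - ψ 0 1)]
  -- notation for min/max split matrices
  set Wmin : ∀ ℓ, Matrix (Fin (n (ℓ + 1))) (Fin (n ℓ)) ℝ :=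
    fun ℓ => Matrix.of fun i j => min (W ℓ i j) 0 with hWmin
  set Wmax : ∀ ℓ, Matrix (Fin (n (ℓ + 1))) (Fin (n ℓ)) ℝ :=
    fun ℓ => Matrix.of fun i j => max (W ℓ i j) 0 with hWmax
  have hWmin_nonpos : ∀ ℓ i j, Wmin ℓ i j ≤ 0 := fun ℓ i j => min_le_right _ _
  have hWmax_nonneg : ∀ ℓ i j, 0 ≤ Wmax ℓ i j := fun ℓ i j => le_max_right _ _
  have hsplit : ∀ ℓ, W ℓ = Wmin ℓ + Wmax ℓ := by
    intro ℓ; ext i j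
    simp [hWmin, hWmax, Matrix.add_apply, min_add_max]
  -- key pre-activation inequalities, given ordering at level ℓ
  have hpre_lo : ∀ ℓ, ηlo ℓ ≤ η ℓ → η ℓ ≤ ηhi ℓ →
      (Wmin ℓ).mulVec (ηhi ℓ) + (Wmax ℓ).mulVec (ηlo ℓ) + b ℓ
        ≤ (W ℓ).mulVec (η ℓ) + b ℓ := by
    intro ℓ h1 h2
    have := add_le_add (mulVec_anti_right' (Wmin ℓ) (hWmin_nonpos ℓ) h2)
      (mulVec_mono_right' (Wmax ℓ) (hWmax_nonneg ℓ) h1)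
    intro i
    have h3 := this i
    simp only [hsplit ℓ, Matrix.add_mulVec, Pi.add_apply] at h3 ⊢
    linarith
  have hpre_hi : ∀ ℓ, ηlo ℓ ≤ η ℓ → η ℓ ≤ ηhi ℓ →
      (W ℓ).mulVec (η ℓ) + b ℓ
        ≤ (Wmin ℓ).mulVec (ηlo ℓ) + (Wmax ℓ).mulVec (ηhi ℓ) + b ℓ := by
    intro ℓ h1 h2
    have := add_le_add (mulVec_anti_right' (Wmin ℓ) (hWmin_nonpos ℓ) h1)
      (mulVec_mono_right' (Wmax ℓ) (hWmax_nonneg ℓ) h2)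
    intro i
    have h3 := this i
    simp only [hsplit ℓ, Matrix.add_mulVec, Pi.add_apply] at h3 ⊢
    linarith
  -- ordering invariant
  have hord : ∀ ℓ, ℓ ≤ L → ηlo ℓ ≤ η ℓ ∧ η ℓ ≤ ηhi ℓ := by
    intro ℓ
    induction ℓ with
    | zero => intro _; exact ⟨h0lo, h0hi⟩
    | succ ℓ ih =>
      intro hle
      have hℓL : ℓ < L := lt_of_lt_of_le (Nat.lt_succ_self ℓ) hle
      obtain ⟨h1, h2⟩ := ih (le_of_lt hℓL)
      constructor
      · rw [hlo ℓ hℓL, hη ℓ hℓL]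
        intro i
        exact hψ ℓ (hpre_lo ℓ h1 h2 i)
      · rw [hη ℓ hℓL, hhi ℓ hℓL]
        intro i
        exact hψ ℓ (hpre_hi ℓ h1 h2 i)
  -- one backward step
  have step : ∀ ℓ, ℓ < L →
      (Slo (ℓ + 1)).mulVec (η (ℓ + 1) - ηlo (ℓ + 1))
        + (Shi (ℓ + 1)).mulVec (ηhi (ℓ + 1) - η (ℓ + 1))
      ≤ (Slo ℓ).mulVec (η ℓ - ηlo ℓ) + (Shi ℓ).mulVec (ηhi ℓ - η ℓ) := by
    intro ℓ hℓ
    obtain ⟨h1, h2⟩ := hord ℓ (le_of_lt hℓ)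
    set u : Fin (n ℓ) → ℝ := η ℓ - ηlo ℓ with hu
    set v : Fin (n ℓ) → ℝ := ηhi ℓ - η ℓ with hv
    have hu0 : 0 ≤ u := fun i => sub_nonneg.2 (h1 i)
    have hv0 : 0 ≤ v := fun i => sub_nonneg.2 (h2 i)
    -- difference of pre-activations, lower side
    have hdiff_lo : ∀ i, ((W ℓ).mulVec (η ℓ) + b ℓ) i
        - ((Wmin ℓ).mulVec (ηhi ℓ) + (Wmax ℓ).mulVec (ηlo ℓ) + b ℓ) i
        = ((Wmax ℓ).mulVec u - (Wmin ℓ).mulVec v) i := by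
      intro i
      simp only [hsplit ℓ, Matrix.add_mulVec, hu, hv, Matrix.mulVec_sub,
        Pi.add_apply, Pi.sub_apply]
      ring
    have hdiff_hi : ∀ i, ((Wmin ℓ).mulVec (ηlo ℓ) + (Wmax ℓ).mulVec (ηhi ℓ) + b ℓ) i
        - ((W ℓ).mulVec (η ℓ) + b ℓ) i
        = ((Wmax ℓ).mulVec v - (Wmin ℓ).mulVec u) i := by
      intro i
      simp only [hsplit ℓ, Matrix.add_mulVec, hu, hv, Matrix.mulVec_sub,
        Pi.add_apply, Pi.sub_apply]
      ring
    have hd1 : η (ℓ + 1) - ηlo (ℓ + 1) ≤ α • ((Wmax ℓ).mulVec u - (Wmin ℓ).mulVec v) := by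
      intro i
      rw [hη ℓ hℓ, hlo ℓ hℓ]
      have hord' := hpre_lo ℓ h1 h2 i
      have hlip' := hlip ℓ (((W ℓ).mulVec (η ℓ) + b ℓ) i)
        (((Wmin ℓ).mulVec (ηhi ℓ) + (Wmax ℓ).mulVec (ηlo ℓ) + b ℓ) i)
      rw [abs_of_nonneg (sub_nonneg.2 hord'), hdiff_lo i] at hlip'
      have := le_trans (le_abs_self _) hlip'
      simpa [Pi.smul_apply, smul_eq_mul] using this
    have hd2 : ηhi (ℓ + 1) - η (ℓ + 1) ≤ α • ((Wmax ℓ).mulVec v - (Wmin ℓ).mulVec u) := by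
      intro i
      rw [hη ℓ hℓ, hhi ℓ hℓ]
      have hord' := hpre_hi ℓ h1 h2 i
      have hlip' := hlip ℓ (((Wmin ℓ).mulVec (ηlo ℓ) + (Wmax ℓ).mulVec (ηhi ℓ) + b ℓ) i)
        (((W ℓ).mulVec (η ℓ) + b ℓ) i)
      rw [abs_of_nonneg (sub_nonneg.2 hord'), hdiff_hi i] at hlip'
      have := le_trans (le_abs_self _) hlip'
      simpa [Pi.smul_apply, smul_eq_mul] using this
    have hS1 := mulVec_mono_right' (Slo (ℓ + 1)) (hSlo_nonneg (ℓ + 1) hℓ) hd1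
    have hS2 := mulVec_mono_right' (Shi (ℓ + 1)) (hShi_nonneg (ℓ + 1) hℓ) hd2
    -- regroup the right-hand sides
    have hregroup :
        (Slo (ℓ + 1)).mulVec (α • ((Wmax ℓ).mulVec u - (Wmin ℓ).mulVec v))
        + (Shi (ℓ + 1)).mulVec (α • ((Wmax ℓ).mulVec v - (Wmin ℓ).mulVec u))
        = (α • (Slo (ℓ + 1) * Wmax ℓ - Shi (ℓ + 1) * Wmin ℓ)).mulVec u
        + (α • (Shi (ℓ + 1) * Wmax ℓ - Slo (ℓ + 1) * Wmin ℓ)).mulVec v := by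
      simp only [Matrix.mulVec_smul, Matrix.mulVec_sub, Matrix.mulVec_mulVec,
        Matrix.smul_mulVec, Matrix.sub_mulVec, smul_sub]
      abel
    have hfin1 : (α • (Slo (ℓ + 1) * Wmax ℓ - Shi (ℓ + 1) * Wmin ℓ)).mulVec u
        ≤ (Slo ℓ).mulVec u :=
      mulVec_mono_left' (fun i j => by
        simpa [Matrix.smul_apply, Matrix.sub_apply, smul_eq_mul] using hrec_lo ℓ hℓ i j) hu0
    have hfin2 : (α • (Shi (ℓ + 1) * Wmax ℓ - Slo (ℓ + 1) * Wmin ℓ)).mulVec v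
        ≤ (Shi ℓ).mulVec v :=
      mulVec_mono_left' (fun i j => by
        simpa [Matrix.smul_apply, Matrix.sub_apply, smul_eq_mul] using hrec_hi ℓ hℓ i j) hv0
    calc (Slo (ℓ + 1)).mulVec (η (ℓ + 1) - ηlo (ℓ + 1))
          + (Shi (ℓ + 1)).mulVec (ηhi (ℓ + 1) - η (ℓ + 1))
        ≤ (Slo (ℓ + 1)).mulVec (α • ((Wmax ℓ).mulVec u - (Wmin ℓ).mulVec v))
          + (Shi (ℓ + 1)).mulVec (α • ((Wmax ℓ).mulVec v - (Wmin ℓ).mulVec u)) :=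
          add_le_add hS1 hS2
      _ = _ := hregroup
      _ ≤ (Slo ℓ).mulVec u + (Shi ℓ).mulVec v := add_le_add hfin1 hfin2
  -- backward induction
  have main : ∀ k ℓ, ℓ + k = L →
      ηhi L - ηlo L ≤ (Slo ℓ).mulVec (η ℓ - ηlo ℓ) + (Shi ℓ).mulVec (ηhi ℓ - η ℓ) := by
    intro k
    induction k with
    | zero =>
      intro ℓ hℓ
      simp only [Nat.add_zero] at hℓ
      subst hℓ
      rw [hSL_lo, hSL_hi, Matrix.one_mulVec, Matrix.one_mulVec]
      intro i
      simp only [Pi.add_apply, Pi.sub_apply]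
      linarith
    | succ k ih =>
      intro ℓ hℓ
      have hℓL : ℓ < L := by omega
      have h' : (ℓ + 1) + k = L := by omega
      exact le_trans (ih (ℓ + 1) h') (step ℓ hℓL)
  exact main L 0 (by omega)
end
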